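/- arXiv:2003.12531 — 3 statements merged into one kernel-verified Lean document; each statement's English description precedes it below -/
import Mathlib

section
/- Let S and T be consistent algebraic theories (each having at least two distinct variables that are not provably equal). If U is a composite theory of T after S (i.e., U contains S and T, every U-term equals a separated term t[s_x/x] with t a T-term and s_x S-terms, and separated representations are essentially unique), then U is consistent: no two distinct variables are provably equal in U. -/
/-! ## Algebraic theories, equational logic, and composite theories (Pirog–Staton) -/

/-- An algebraic signature: a set of operation symbols with arities. -/
structure Sig : Type 1 where
  ops : Type
  ar : ops → ℕ

/-- Terms over a signature with variables in `X`. -/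
inductive Tm (σ : Sig) (X : Type) : Type
  | var : X → Tm σ X
  | op : (g : σ.ops) → (Fin (σ.ar g) → Tm σ X) → Tm σ X

/-- Simultaneous substitution of terms for variables. -/
def Tm.bind {σ : Sig} {X Y : Type} : Tm σ X → (X → Tm σ Y) → Tm σ Y
  | .var x, f => f x
  | .op g a, f => .op g fun i => (a i).bind f

/-- Substitution of variables for variables (renaming). -/
def Tm.rename {σ : Sig} {X Y : Type} (t : Tm σ X) (f : X → Y) : Tm σ Y :=
  t.bind fun x => .var (f x)

/-- The set of variables occurring in a term. -/
def Tm.vars {σ : Sig} {X : Type} : Tm σ X → Set X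
  | .var x => {x}
  | .op _ a => ⋃ i, (a i).vars

/-- An algebraic theory: a signature together with a set of equations
(pairs of terms over natural-number variables). -/
structure Theory : Type 1 where
  sig : Sig
  axioms : Tm sig ℕ → Tm sig ℕ → Prop

/-- Provable equality in equational logic from the axioms of a theory. -/
inductive Theory.Eq (Th : Theory) : {X : Type} → Tm Th.sig X → Tm Th.sig X → Prop
  | ax {X : Type} {l r : Tm Th.sig ℕ} (h : Th.axioms l r) (f : ℕ → Tm Th.sig X) :
      Theory.Eq Th (l.bind f) (r.bind f)
  | refl {X : Type} (t : Tm Th.sig X) : Theory.Eq Th t t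
  | symm {X : Type} {a b : Tm Th.sig X} : Theory.Eq Th a b → Theory.Eq Th b a
  | trans {X : Type} {a b c : Tm Th.sig X} :
      Theory.Eq Th a b → Theory.Eq Th b c → Theory.Eq Th a c
  | congr {X : Type} (g : Th.sig.ops) {a b : Fin (Th.sig.ar g) → Tm Th.sig X}
      (h : ∀ i, Theory.Eq Th (a i) (b i)) : Theory.Eq Th (.op g a) (.op g b)

/-- A theory is consistent if distinct variables are not provably equal. -/
def Theory.Consistent (Th : Theory) : Prop :=
  ∀ x y : ℕ, Th.Eq (X := ℕ) (.var x) (.var y) → x = y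

/-- Disjoint union of signatures. -/
def Sig.sum (σ τ : Sig) : Sig := ⟨σ.ops ⊕ τ.ops, Sum.elim σ.ar τ.ar⟩

/-- Embedding of terms of the left signature into the sum. -/
def Tm.inL {σ τ : Sig} {X : Type} : Tm σ X → Tm (σ.sum τ) X
  | .var x => .var x
  | .op g a => .op (Sum.inl g) fun i => Tm.inL (a i)

/-- Embedding of terms of the right signature into the sum. -/
def Tm.inR {σ τ : Sig} {X : Type} : Tm τ X → Tm (σ.sum τ) X
  | .var x => .var x
  | .op g a => .op (Sum.inr g) fun i => Tm.inR (a i)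

/-- A separated term `t[s_x/x]`: a `τ`-term `t` whose variables are substituted
by `σ`-terms `s x`. -/
def sep {σ τ : Sig} {X : Type} (t : Tm τ X) (s : X → Tm σ ℕ) : Tm (σ.sum τ) ℕ :=
  (Tm.inR t).bind fun x => Tm.inL (s x)

/-- Equality modulo `(T, S)` of two separated terms, in the sense of Pirog and Staton. -/
def EqMod (S T : Theory) {X X' : Type}
    (t : Tm T.sig X) (s : X → Tm S.sig ℕ)
    (t' : Tm T.sig X') (s' : X' → Tm S.sig ℕ) : Prop :=
  ∃ (Y : Type) (f₁ : X → Y) (f₂ : X' → Y) (sb : Y → Tm S.sig ℕ),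
    T.Eq (t.rename f₁) (t'.rename f₂) ∧
    (∀ x, S.Eq (s x) (sb (f₁ x))) ∧
    (∀ x', S.Eq (s' x') (sb (f₂ x')))

/-- A composite theory of `T` after `S`: a theory on the disjoint union of the
signatures, containing both `S` and `T`, in which every term is provably equal to
a separated term (a `T`-term of `S`-terms), essentially uniquely. -/
structure Composite (S T : Theory) where
  axioms : Tm (S.sig.sum T.sig) ℕ → Tm (S.sig.sum T.sig) ℕ → Prop
  containsS : ∀ {X : Type} (a b : Tm S.sig X), S.Eq a b →
    Theory.Eq ⟨S.sig.sum T.sig, axioms⟩ (Tm.inL a) (Tm.inL b)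
  containsT : ∀ {X : Type} (a b : Tm T.sig X), T.Eq a b →
    Theory.Eq ⟨S.sig.sum T.sig, axioms⟩ (Tm.inR a) (Tm.inR b)
  separation : ∀ u : Tm (S.sig.sum T.sig) ℕ,
    ∃ (X : Type) (t : Tm T.sig X) (s : X → Tm S.sig ℕ),
      Theory.Eq ⟨S.sig.sum T.sig, axioms⟩ u (sep t s)
  essentiallyUnique : ∀ {X X' : Type} (t : Tm T.sig X) (s : X → Tm S.sig ℕ)
      (t' : Tm T.sig X') (s' : X' → Tm S.sig ℕ),
      Theory.Eq ⟨S.sig.sum T.sig, axioms⟩ (sep t s) (sep t' s') →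
      EqMod S T t s t' s'

/-- The underlying theory of a composite. -/
def Composite.theory {S T : Theory} (C : Composite S T) : Theory :=
  ⟨S.sig.sum T.sig, C.axioms⟩

/-- A set of terms is stable if it is closed under renaming of variables. -/
def Stable {σ : Sig} (Ts : Set (Tm σ ℕ)) : Prop :=
  ∀ t ∈ Ts, ∀ f : ℕ → ℕ, t.rename f ∈ Ts

/-- A set of terms is universal if every term is provably equal to one in the set. -/
def Universal (Th : Theory) (Ts : Set (Tm Th.sig ℕ)) : Prop :=
  ∀ t : Tm Th.sig ℕ, ∃ t' ∈ Ts, Th.Eq t t'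

/-- Apply a binary term (a term with variables among `0` and `1`) to two arguments. -/
def subst2 {σ : Sig} {X : Type} (b : Tm σ ℕ) (t u : Tm σ X) : Tm σ X :=
  b.bind fun i => if i = 0 then t else u


theorem Tm.bind_bind {σ : Sig} {X Y Z : Type} (t : Tm σ X) (f : X → Tm σ Y)
    (g : Y → Tm σ Z) : (t.bind f).bind g = t.bind (fun x => (f x).bind g) := by
  induction t with
  | var x => rfl
  | op h a ih => simp [Tm.bind, ih]

theorem Theory.Eq.bind {Th : Theory} {X Y : Type} {a b : Tm Th.sig X}
    (h : Th.Eq a b) (f : X → Tm Th.sig Y) : Th.Eq (a.bind f) (b.bind f) := by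
  induction h with
  | ax hax g => rw [Tm.bind_bind, Tm.bind_bind]; exact Theory.Eq.ax hax _
  | refl t => exact Theory.Eq.refl _
  | symm _ ih => exact ih.symm
  | trans _ _ ih1 ih2 => exact ih1.trans ih2
  | congr g _ ih => exact Theory.Eq.congr g ih

theorem var_eq_of_eq {Th : Theory} (hTh : Th.Consistent) {Y : Type}
    {y₁ y₂ : Y} (h : Th.Eq (X := Y) (.var y₁) (.var y₂)) : y₁ = y₂ := by
  classical
  by_contra hne
  have := h.bind (fun y => Tm.var (if y = y₁ then 0 else 1))
  have key : Th.Eq (X := ℕ) (.var 0) (.var 1) := by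
    simpa [Tm.bind, Ne.symm hne] using this
  exact absurd (hTh 0 1 key) (by norm_num)

/-- If `S` and `T` are consistent theories and `U` is a composite
theory of `T` after `S`, then `U` is consistent. -/
theorem composite_consistent (S T : Theory) (hS : S.Consistent) (hT : T.Consistent)
    (C : Composite S T) : C.theory.Consistent := by
  intro x y h
  have hsep : C.theory.Eq (sep (Tm.var () : Tm T.sig Unit) (fun _ => Tm.var x))
      (sep (Tm.var () : Tm T.sig Unit) (fun _ => Tm.var y)) := h
  obtain ⟨Y, f₁, f₂, sb, ht, hs1, hs2⟩ :=
    C.essentiallyUnique _ _ _ _ hsep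
  have hf : f₁ () = f₂ () := var_eq_of_eq hT ht
  have : S.Eq (X := ℕ) (.var x) (.var y) := by
    refine (hs1 ()).trans ?_
    rw [hf]
    exact (hs2 ()).symm
  exact hS x y this
end

section
/- Let n, m be strictly positive natural numbers and σ a fixed-point-free permutation of {1,...,m}. For distinct variables a_i^j (1 ≤ i ≤ m, 1 ≤ j ≤ n) and indices i_1,...,i_n ∈ {1,...,m}, the n sets S_k = {a_{i_k}^1, ..., a_{i_k}^{k-1}, a_{σ(i_k)}^k, a_{i_k}^{k+1}, ..., a_{i_k}^n} for 2 ≤ k ≤ n together with S_1 = {a_{i_1}^1, ..., a_{i_1}^n} have at most one common element. -/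
/-- the filtering lemma. Given pairwise distinct elements `a i j`,
a fixed-point-free permutation `σ`, and indices `idx k`, the row sets (where row `k`,
for `k ≠ 0`, uses `σ (idx k)` in column `k` and `idx k` elsewhere, and row `0` is
constant) have at most one common element. -/
theorem filter_lemma {α : Type} {n m : ℕ} (hn : 0 < n) (hm : 0 < m)
    (a : Fin m → Fin n → α)
    (ha : Function.Injective fun p : Fin m × Fin n => a p.1 p.2)
    (σ : Equiv.Perm (Fin m)) (hσ : ∀ i, σ i ≠ i)
    (idx : Fin n → Fin m) :
    (⋂ k : Fin n, Set.range fun j : Fin n =>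
        a (if j = k ∧ k.val ≠ 0 then σ (idx k) else idx k) j).Subsingleton := by
  intro x hx y hy
  simp only [Set.mem_iInter, Set.mem_range] at hx hy
  have hinj : ∀ (r r' : Fin m) (j j' : Fin n), a r j = a r' j' → r = r' ∧ j = j' := by
    intro r r' j j' h
    have := ha (a₁ := (r, j)) (a₂ := (r', j')) h
    exact ⟨congrArg Prod.fst this, congrArg Prod.snd this⟩
  have z : Fin n := ⟨0, hn⟩
  -- From k = 0, both x and y lie in row idx 0
  obtain ⟨j0, hj0⟩ := hx ⟨0, hn⟩
  obtain ⟨j1, hj1⟩ := hy ⟨0, hn⟩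
  simp only [ne_eq, not_true_eq_false, and_false, if_false] at hj0 hj1
  -- helper: contradiction if two distinct columns, second nonzero
  have key : ∀ (u v : α) (ju jv : Fin n),
      (∀ k, ∃ j, a (if j = k ∧ k.val ≠ 0 then σ (idx k) else idx k) j = u) →
      (∀ k, ∃ j, a (if j = k ∧ k.val ≠ 0 then σ (idx k) else idx k) j = v) →
      a (idx ⟨0, hn⟩) ju = u → a (idx ⟨0, hn⟩) jv = v → ju ≠ jv → jv.val ≠ 0 → False := by
    intro u v ju jv hu hv hau hav hne hjv
    -- v's witness in S_{jv}
    obtain ⟨j, hj⟩ := hv jv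
    rw [← hav] at hj
    by_cases hc : j = jv ∧ jv.val ≠ 0
    · rw [if_pos hc] at hj
      have h1 := (hinj _ _ _ _ hj).1
      -- u's witness in S_{jv}
      obtain ⟨j', hj'⟩ := hu jv
      rw [← hau] at hj'
      by_cases hc' : j' = jv ∧ jv.val ≠ 0
      · rw [if_pos hc'] at hj'
        have := hinj _ _ _ _ hj'
        exact hne ((this.2.symm.trans hc'.1).symm ▸ rfl : ju = jv)
      · rw [if_neg hc'] at hj'
        have h2 := (hinj _ _ _ _ hj').1
        exact hσ (idx jv) (h1.trans h2.symm)
    · rw [if_neg hc] at hj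
      exact hc ⟨(hinj _ _ _ _ hj).2, hjv⟩
  by_cases hjj : j0 = j1
  · rw [← hj0, ← hj1, hjj]
  · rcases Nat.eq_zero_or_pos j1.val with h1 | h1
    · have h0 : j0.val ≠ 0 := by
        intro h0
        exact hjj (Fin.ext (h0.trans h1.symm))
      exact absurd (key y x j1 j0 hy hx hj1 hj0 (fun h => hjj h.symm) h0) id
    · exact absurd (key x y j0 j1 hx hy hj0 hj1 hjj (Nat.pos_iff_ne_zero.mp h1)) id
end

section
/- Let S and T satisfy all hypotheses of the times-over-plus theorem (S has binary ⋄ with unit, every S-term with variables reducible to any of its variables by substitution, terms equal to constants have no variables, terms equal to variables are single-variable; T has binary ⊗ with unit, same variable conditions), and additionally suppose ⊗ does not satisfy the abides equation nontrivially: whenever ⊗(⊗(x,y),⊗(z,w)) =_T ⊗(⊗(x,z),⊗(y,w)), the four variables x,y,z,w cannot all be distinct. Then there is no composite theory of T after S. -/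
/-! ### Generic lemmas about terms -/

namespace Tm

theorem bind_bind_s8 {σ : Sig} {X Y Z : Type} (t : Tm σ X) (f : X → Tm σ Y) (g : Y → Tm σ Z) :
    (t.bind f).bind g = t.bind (fun x => (f x).bind g) := by
  induction t with
  | var x => rfl
  | op o a ih => simp [Tm.bind, ih]

theorem bind_var {σ : Sig} {X : Type} (t : Tm σ X) : t.bind .var = t := by
  induction t with
  | var x => rfl
  | op o a ih => simp [Tm.bind, ih]

theorem mem_vars_bind {σ : Sig} {X Y : Type} {t : Tm σ X} {f : X → Tm σ Y} {v : Y} :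
    v ∈ (t.bind f).vars ↔ ∃ x ∈ t.vars, v ∈ (f x).vars := by
  induction t with
  | var x => simp [Tm.bind, Tm.vars]
  | op o a ih =>
      simp only [Tm.bind, Tm.vars, Set.mem_iUnion, ih]
      constructor
      · rintro ⟨i, x, hx, hv⟩; exact ⟨x, ⟨i, hx⟩, hv⟩
      · rintro ⟨x, ⟨i, hx⟩, hv⟩; exact ⟨i, x, hx, hv⟩

theorem bind_congr {σ : Sig} {X Y : Type} {t : Tm σ X} {f g : X → Tm σ Y}
    (h : ∀ x ∈ t.vars, f x = g x) : t.bind f = t.bind g := by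
  induction t with
  | var x => exact h x (by simp [Tm.vars])
  | op o a ih =>
      simp only [Tm.bind]
      congr 1
      funext i
      refine ih i (fun x hx => h x ?_)
      show x ∈ ⋃ j, (a j).vars
      exact Set.mem_iUnion.2 ⟨i, hx⟩

theorem mem_vars_rename {σ : Sig} {X Y : Type} {t : Tm σ X} {f : X → Y} {v : Y} :
    v ∈ (t.rename f).vars ↔ ∃ x ∈ t.vars, f x = v := by
  simp [Tm.rename, mem_vars_bind, Tm.vars, eq_comm]

theorem rename_bind {σ : Sig} {X Y Z : Type} (t : Tm σ X) (f : X → Y) (g : Y → Tm σ Z) :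
    (t.rename f).bind g = t.bind (fun x => g (f x)) := by
  simp [Tm.rename, bind_bind_s8, Tm.bind]

theorem bind_rename {σ : Sig} {X Y Z : Type} (t : Tm σ X) (f : X → Tm σ Y) (g : Y → Z) :
    (t.bind f).rename g = t.bind (fun x => (f x).rename g) := by
  simp [Tm.rename, bind_bind_s8]

theorem rename_rename {σ : Sig} {X Y Z : Type} (t : Tm σ X) (f : X → Y) (g : Y → Z) :
    (t.rename f).rename g = t.rename (g ∘ f) := by
  simp [Tm.rename, bind_bind_s8, Tm.bind]

theorem inL_bind {σ τ : Sig} {X Y : Type} (t : Tm σ X) (f : X → Tm σ Y) :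
    (Tm.inL (τ := τ) (t.bind f)) = (Tm.inL t).bind (fun x => Tm.inL (f x)) := by
  induction t with
  | var x => rfl
  | op o a ih =>
      simp [Tm.bind, Tm.inL, ih]
      exact congrArg (Tm.op (σ := σ.sum τ) (Sum.inl o)) (funext ih :
        (fun i => ((a i).bind f).inL) = fun i => (a i).inL.bind fun x => (f x).inL)

theorem inR_bind {σ τ : Sig} {X Y : Type} (t : Tm τ X) (f : X → Tm τ Y) :
    (Tm.inR (σ := σ) (t.bind f)) = (Tm.inR t).bind (fun x => Tm.inR (f x)) := by
  induction t with
  | var x => rfl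
  | op o a ih =>
      simp [Tm.bind, Tm.inR, ih]
      exact congrArg (Tm.op (σ := σ.sum τ) (Sum.inr o)) (funext ih :
        (fun i => ((a i).bind f).inR) = fun i => (a i).inR.bind fun x => (f x).inR)

theorem vars_inL {σ τ : Sig} {X : Type} (t : Tm σ X) : (Tm.inL (τ := τ) t).vars = t.vars := by
  induction t with
  | var x => rfl
  | op o a ih =>
      show (⋃ i, ((a i).inL : Tm (σ.sum τ) X).vars) = _
      simp only [ih]; rfl

theorem vars_inR {σ τ : Sig} {X : Type} (t : Tm τ X) : (Tm.inR (σ := σ) t).vars = t.vars := by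
  induction t with
  | var x => rfl
  | op o a ih =>
      show (⋃ i, ((a i).inR : Tm (σ.sum τ) X).vars) = _
      simp only [ih]; rfl

end Tm

/-! ### Generic lemmas about equational logic -/

namespace Theory

theorem Eq.bind' {Th : Theory} {X : Type} {a b : Tm Th.sig X} (h : Th.Eq a b) :
    ∀ {Y : Type} (f : X → Tm Th.sig Y), Th.Eq (a.bind f) (b.bind f) := by
  induction h with
  | ax h f => intro Y g; rw [Tm.bind_bind_s8, Tm.bind_bind_s8]; exact .ax h _
  | refl t => intro Y g; exact .refl _
  | symm h ih => intro Y g; exact .symm (ih g)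
  | trans h1 h2 ih1 ih2 => intro Y g; exact .trans (ih1 g) (ih2 g)
  | congr o h ih => intro Y g; exact .congr o (fun i => ih i g)

theorem Eq.rename' {Th : Theory} {X Y : Type} {a b : Tm Th.sig X} (h : Th.Eq a b)
    (f : X → Y) : Th.Eq (a.rename f) (b.rename f) := h.bind' _

/-- pointwise congruence of bind -/
theorem Eq.bind_pt {Th : Theory} {X Y : Type} (t : Tm Th.sig X) {f g : X → Tm Th.sig Y}
    (h : ∀ x, Th.Eq (f x) (g x)) : Th.Eq (t.bind f) (t.bind g) := by
  induction t with
  | var x => exact h x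
  | op o a ih => exact .congr o (fun i => ih i)

end Theory
namespace Tm

theorem bind_of_closed {σ : Sig} {X Y : Type} {t : Tm σ X} (h : t.vars = ∅)
    (f : X → Tm σ Y) (g : X → Tm σ Y) : t.bind f = t.bind g :=
  bind_congr (fun x hx => by rw [h] at hx; exact absurd hx (Set.notMem_empty x))

theorem rename_congr {σ : Sig} {X Y : Type} {t : Tm σ X} {f g : X → Y}
    (h : ∀ x ∈ t.vars, f x = g x) : t.rename f = t.rename g :=
  bind_congr (fun x hx => by rw [h x hx])

theorem inL_rename {σ τ : Sig} {X Y : Type} (t : Tm σ X) (f : X → Y) :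
    (Tm.inL (τ := τ) (t.rename f)) = (Tm.inL t).rename f := by
  rw [Tm.rename, Tm.inL_bind]; rfl

theorem inR_rename {σ τ : Sig} {X Y : Type} (t : Tm τ X) (f : X → Y) :
    (Tm.inR (σ := σ) (t.rename f)) = (Tm.inR t).rename f := by
  rw [Tm.rename, Tm.inR_bind]; rfl

end Tm

/-- Provable equality preserves the set of variables, provided the theory has a
closed term and does not equate closed terms with non-closed ones. -/
theorem vars_eq_of_eq {Th : Theory} (K : Tm Th.sig ℕ) (hK : K.vars = ∅)
    (h0 : ∀ a b : Tm Th.sig ℕ, a.vars = ∅ → Th.Eq a b → b.vars = ∅)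
    {Y : Type} {a b : Tm Th.sig Y} (h : Th.Eq a b) : a.vars = b.vars := by
  classical
  have sub : ∀ {a b : Tm Th.sig Y}, Th.Eq a b → b.vars ⊆ a.vars := by
    intro a b hab v hvb
    by_contra hva
    set χ : Y → ℕ := fun w => if w = v then 1 else 0 with hχ
    have h1 := hab.rename' χ
    set f : ℕ → Tm Th.sig ℕ := fun n => if n = 0 then K else .var n with hf
    have h2 := h1.bind' f
    have hva2 : ((a.rename χ).bind f).vars = ∅ := by
      ext m
      simp only [Tm.mem_vars_bind, Tm.mem_vars_rename, Set.mem_empty_iff_false, iff_false]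
      rintro ⟨n, ⟨x, hx, rfl⟩, hm⟩
      have hx0 : χ x = 0 := by
        simp only [hχ]
        rw [if_neg]
        intro hxv; exact hva (hxv ▸ hx)
      rw [hx0] at hm
      simp only [hf, if_pos rfl] at hm
      rw [hK] at hm
      exact hm
    have h1mem : (1 : ℕ) ∈ ((b.rename χ).bind f).vars := by
      apply Tm.mem_vars_bind.2
      refine ⟨1, Tm.mem_vars_rename.2 ⟨v, hvb, by simp [hχ]⟩, ?_⟩
      simp [hf, Tm.vars]
    rw [h0 _ _ hva2 h2] at h1mem
    exact h1mem
  exact Set.Subset.antisymm (sub h.symm) (sub h)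

theorem var_inj {Th : Theory} (h1 : ∀ (a : Tm Th.sig ℕ) (x : ℕ), Th.Eq a (.var x) → a.vars ⊆ {x})
    {x y : ℕ} (h : Th.Eq (.var x : Tm Th.sig ℕ) (.var y)) : x = y := by
  have := h1 _ _ h
  simpa [Tm.vars] using this

/-- A binary operation with unit has exactly variables 0 and 1. -/
theorem vars_eq_01 {Th : Theory} (b e : Tm Th.sig ℕ) (hbv : b.vars ⊆ {0, 1}) (he : e.vars = ∅)
    (hR : Th.Eq (subst2 b (.var 0) e) (.var 0)) (hL : Th.Eq (subst2 b e (.var 0)) (.var 0))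
    (h0 : ∀ a b' : Tm Th.sig ℕ, a.vars = ∅ → Th.Eq a b' → b'.vars = ∅) :
    b.vars = {0, 1} := by
  have hRv := vars_eq_of_eq e he h0 hR
  have hLv := vars_eq_of_eq e he h0 hL
  have h0mem : (0 : ℕ) ∈ b.vars := by
    have : (0 : ℕ) ∈ (subst2 b (.var 0) e).vars := by rw [hRv]; simp [Tm.vars]
    obtain ⟨x, hx, hm⟩ := Tm.mem_vars_bind.1 this
    by_cases hx0 : x = 0
    · exact hx0 ▸ hx
    · rw [if_neg hx0, he] at hm; exact absurd hm (Set.notMem_empty _)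
  have h1mem : (1 : ℕ) ∈ b.vars := by
    have : (0 : ℕ) ∈ (subst2 b e (.var 0)).vars := by rw [hLv]; simp [Tm.vars]
    obtain ⟨x, hx, hm⟩ := Tm.mem_vars_bind.1 this
    by_cases hx0 : x = 0
    · rw [if_pos hx0, he] at hm; exact absurd hm (Set.notMem_empty _)
    · have := hbv hx
      simp only [Set.mem_insert_iff, Set.mem_singleton_iff] at this
      rcases this with h | h
      · exact absurd h hx0
      · exact h ▸ hx
  apply Set.Subset.antisymm hbv
  intro n hn
  simp only [Set.mem_insert_iff, Set.mem_singleton_iff] at hn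
  rcases hn with rfl | rfl
  · exact h0mem
  · exact h1mem

/-! ### Binary application of embedded terms in a sum signature -/

/-- Apply (the left embedding of) a binary `σ`-term to two arguments. -/
def DD {σ τ : Sig} (d : Tm σ ℕ) {X : Type} (u v : Tm (σ.sum τ) X) : Tm (σ.sum τ) X :=
  (Tm.inL d).bind (fun n => if n = 0 then u else v)

/-- Apply (the right embedding of) a binary `τ`-term to two arguments. -/
def TT {σ τ : Sig} (t : Tm τ ℕ) {X : Type} (u v : Tm (σ.sum τ) X) : Tm (σ.sum τ) X :=
  (Tm.inR t).bind (fun n => if n = 0 then u else v)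

theorem DD_bind {σ τ : Sig} (d : Tm σ ℕ) {X Y : Type} (u v : Tm (σ.sum τ) X)
    (g : X → Tm (σ.sum τ) Y) : (DD d u v).bind g = DD d (u.bind g) (v.bind g) := by
  unfold DD; rw [Tm.bind_bind_s8]; congr 1; funext n; split <;> rfl

theorem TT_bind {σ τ : Sig} (t : Tm τ ℕ) {X Y : Type} (u v : Tm (σ.sum τ) X)
    (g : X → Tm (σ.sum τ) Y) : (TT t u v).bind g = TT t (u.bind g) (v.bind g) := by
  unfold TT; rw [Tm.bind_bind_s8]; congr 1; funext n; split <;> rfl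

@[simp] theorem inL_var {σ τ : Sig} {X : Type} (x : X) :
    (Tm.inL (τ := τ) (.var x : Tm σ X)) = .var x := rfl

@[simp] theorem inR_var {σ τ : Sig} {X : Type} (x : X) :
    (Tm.inR (σ := σ) (.var x : Tm τ X)) = .var x := rfl

theorem inL_subst2 {σ τ : Sig} (d : Tm σ ℕ) {X : Type} (u v : Tm σ X) :
    (Tm.inL (τ := τ) (subst2 d u v)) = DD d (.inL u) (.inL v) := by
  unfold subst2 DD; rw [Tm.inL_bind]; congr 1; funext n; split <;> rfl

theorem inR_subst2 {σ τ : Sig} (t : Tm τ ℕ) {X : Type} (u v : Tm τ X) :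
    (Tm.inR (σ := σ) (subst2 t u v)) = TT t (.inR u) (.inR v) := by
  unfold subst2 TT; rw [Tm.inR_bind]; congr 1; funext n; split <;> rfl

theorem subst2_rename {σ : Sig} (b : Tm σ ℕ) {X Y : Type} (u v : Tm σ X) (f : X → Y) :
    (subst2 b u v).rename f = subst2 b (u.rename f) (v.rename f) := by
  unfold subst2; rw [Tm.bind_rename]; congr 1; funext n; split <;> rfl

theorem bin_congr {Th : Theory} (r : Tm Th.sig ℕ) {X : Type} {a a' b b' : Tm Th.sig X}
    (h1 : Th.Eq a a') (h2 : Th.Eq b b') :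
    Th.Eq (r.bind fun n => if n = 0 then a else b) (r.bind fun n => if n = 0 then a' else b') :=
  Theory.Eq.bind_pt _ (fun n => by split; exacts [h1, h2])

/-- Composing a `T`-term of separated terms into a single separated term. -/
theorem sep_comp {σ τ : Sig} {X : Type} {Z : X → Type} (c : Tm τ X)
    (p : ∀ x, Tm τ (Z x)) (q : ∀ x, Z x → Tm σ ℕ) :
    (Tm.inR (σ := σ) c).bind (fun x => sep (p x) (q x)) =
    sep (c.bind (fun x => (p x).rename (Sigma.mk x))) (fun w => q w.1 w.2) := by
  unfold sep
  rw [Tm.inR_bind, Tm.bind_bind_s8]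
  congr 1
  funext x
  rw [Tm.inR_rename, Tm.rename_bind]
section CompositeLemmas

variable {S T : Theory} (C : Composite S T)

/-- In the composite theory, a left unit of `d` absorbs: `DD d eS c ≡ c`. -/
theorem absorbDL {d eS : Tm S.sig ℕ} (hdUnitL : S.Eq (subst2 d eS (.var 0)) (.var 0))
    (heS : eS.vars = ∅) (c : Tm (S.sig.sum T.sig) ℕ) :
    C.theory.Eq (DD d (.inL eS) c) c := by
  have h := C.containsS _ _ hdUnitL
  have h2 := h.bind' (fun n => if n = 0 then c else .var n)
  rw [inL_subst2] at h2
  rw [DD_bind] at h2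
  have e1 : (Tm.inL (τ := T.sig) eS).bind (fun n => if n = 0 then c else .var n)
      = Tm.inL eS := by
    rw [Tm.bind_of_closed (by rw [Tm.vars_inL]; exact heS) _ Tm.var, Tm.bind_var]
  rw [e1] at h2
  exact h2

theorem absorbDR {d eS : Tm S.sig ℕ} (hdUnitR : S.Eq (subst2 d (.var 0) eS) (.var 0))
    (heS : eS.vars = ∅) (c : Tm (S.sig.sum T.sig) ℕ) :
    C.theory.Eq (DD d c (.inL eS)) c := by
  have h := C.containsS _ _ hdUnitR
  have h2 := h.bind' (fun n => if n = 0 then c else .var n)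
  rw [inL_subst2] at h2
  rw [DD_bind] at h2
  have e1 : (Tm.inL (τ := T.sig) eS).bind (fun n => if n = 0 then c else .var n)
      = Tm.inL eS := by
    rw [Tm.bind_of_closed (by rw [Tm.vars_inL]; exact heS) _ Tm.var, Tm.bind_var]
  rw [e1] at h2
  exact h2

theorem absorbTL {t eT : Tm T.sig ℕ} (htUnitL : T.Eq (subst2 t eT (.var 0)) (.var 0))
    (heT : eT.vars = ∅) (c : Tm (S.sig.sum T.sig) ℕ) :
    C.theory.Eq (TT t (.inR eT) c) c := by
  have h := C.containsT _ _ htUnitL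
  have h2 := h.bind' (fun n => if n = 0 then c else .var n)
  rw [inR_subst2] at h2
  rw [TT_bind] at h2
  have e1 : (Tm.inR (σ := S.sig) eT).bind (fun n => if n = 0 then c else .var n)
      = Tm.inR eT := by
    rw [Tm.bind_of_closed (by rw [Tm.vars_inR]; exact heT) _ Tm.var, Tm.bind_var]
  rw [e1] at h2
  exact h2

theorem absorbTR {t eT : Tm T.sig ℕ} (htUnitR : T.Eq (subst2 t (.var 0) eT) (.var 0))
    (heT : eT.vars = ∅) (c : Tm (S.sig.sum T.sig) ℕ) :
    C.theory.Eq (TT t c (.inR eT)) c := by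
  have h := C.containsT _ _ htUnitR
  have h2 := h.bind' (fun n => if n = 0 then c else .var n)
  rw [inR_subst2] at h2
  rw [TT_bind] at h2
  have e1 : (Tm.inR (σ := S.sig) eT).bind (fun n => if n = 0 then c else .var n)
      = Tm.inR eT := by
    rw [Tm.bind_of_closed (by rw [Tm.vars_inR]; exact heT) _ Tm.var, Tm.bind_var]
  rw [e1] at h2
  exact h2

/-- `EqMod` data yields provable equality of the separated terms in the composite. -/
theorem eqmod_to_U {X X' : Type} {t : Tm T.sig X} {s : X → Tm S.sig ℕ}
    {t' : Tm T.sig X'} {s' : X' → Tm S.sig ℕ} (h : EqMod S T t s t' s') :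
    C.theory.Eq (sep t s) (sep t' s') := by
  obtain ⟨Y, f₁, f₂, sb, hT, hs, hs'⟩ := h
  have step1 : C.theory.Eq (sep t s) ((Tm.inR t).bind (fun x => .inL (sb (f₁ x)))) :=
    Theory.Eq.bind_pt _ (fun x => C.containsS _ _ (hs x))
  have e2 : (Tm.inR (σ := S.sig) t).bind (fun x => Tm.inL (sb (f₁ x)))
      = (Tm.inR (t.rename f₁)).bind (fun y => Tm.inL (sb y)) := by
    rw [Tm.inR_rename, Tm.rename_bind]
  have step3 : C.theory.Eq ((Tm.inR (t.rename f₁)).bind (fun y => Tm.inL (sb y)))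
      ((Tm.inR (t'.rename f₂)).bind (fun y => Tm.inL (sb y))) :=
    (C.containsT _ _ hT).bind' _
  have e4 : (Tm.inR (σ := S.sig) (t'.rename f₂)).bind (fun y => Tm.inL (sb y))
      = (Tm.inR t').bind (fun x => Tm.inL (sb (f₂ x))) := by
    rw [Tm.inR_rename, Tm.rename_bind]
  have step5 : C.theory.Eq ((Tm.inR t').bind (fun x => Tm.inL (sb (f₂ x)))) (sep t' s') :=
    Theory.Eq.bind_pt _ (fun x => (C.containsS _ _ (hs' x)).symm)
  exact step1.trans ((e2 ▸ step3).trans (e4 ▸ step5))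

end CompositeLemmas
section KillLemma

variable {S T : Theory}

/-- The key analysis: if a term `w` with separated form `sep t₁ s₁` becomes,
after a substitution `σk`, provably equal to a pure `S`-term `res`, then every
label `s₁ x` (for `x` occurring in `t₁`) that is untouched by `σk` is `S`-provably
equal to `res`. -/
theorem killLemma (C : Composite S T) (eT : Tm T.sig ℕ) (heT : eT.vars = ∅)
    (hT0 : ∀ a b : Tm T.sig ℕ, a.vars = ∅ → T.Eq a b → b.vars = ∅)
    (w : Tm (S.sig.sum T.sig) ℕ) {X : Type} (t₁ : Tm T.sig X) (s₁ : X → Tm S.sig ℕ)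
    (hsep : C.theory.Eq w (sep t₁ s₁))
    (σk : ℕ → Tm (S.sig.sum T.sig) ℕ) (res : Tm S.sig ℕ)
    (hkill : C.theory.Eq (w.bind σk) (.inL res)) :
    ∀ x ∈ t₁.vars, (∀ m ∈ (s₁ x).vars, σk m = .var m) → S.Eq (s₁ x) res := by
  classical
  intro x hx hfix
  have varsT : ∀ {Y : Type} {a b : Tm T.sig Y}, T.Eq a b → a.vars = b.vars :=
    fun h => vars_eq_of_eq eT heT hT0 h
  have h1 : C.theory.Eq ((sep t₁ s₁).bind σk) (.inL res) :=
    ((hsep.bind' σk).symm).trans hkill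
  choose Z p q hpq using fun y : X => C.separation ((Tm.inL (s₁ y)).bind σk)
  have e2 : (sep t₁ s₁).bind σk = (Tm.inR t₁).bind (fun y => (Tm.inL (s₁ y)).bind σk) := by
    unfold sep; rw [Tm.bind_bind_s8]
  have h3 : C.theory.Eq ((Tm.inR t₁).bind (fun y => (Tm.inL (s₁ y)).bind σk))
      ((Tm.inR t₁).bind (fun y => sep (p y) (q y))) :=
    Theory.Eq.bind_pt _ (fun y => hpq y)
  rw [sep_comp t₁ p q] at h3
  have h4 : C.theory.Eq (sep (Tm.var 0 : Tm T.sig ℕ) (fun _ => res))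
      (sep (t₁.bind fun y => (p y).rename (Sigma.mk y)) (fun u => q u.1 u.2)) := by
    refine Theory.Eq.trans ?_ h3
    show C.theory.Eq (.inL res) _
    rw [← e2]
    exact h1.symm
  obtain ⟨Y', f₁, f₂, sb', hT', hs', hQ'⟩ := C.essentiallyUnique _ _ _ _ h4
  have hvP := varsT hT'
  have hconst : ∀ u ∈ (t₁.bind fun y => (p y).rename (Sigma.mk y)).vars, f₂ u = f₁ 0 := by
    intro u hu
    have hmem : f₂ u ∈ ((t₁.bind fun y => (p y).rename (Sigma.mk y)).rename f₂).vars :=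
      Tm.mem_vars_rename.2 ⟨u, hu, rfl⟩
    rw [← hvP] at hmem
    simpa [Tm.rename, Tm.bind, Tm.vars] using hmem
  have Mx : (Tm.inL (τ := T.sig) (s₁ x)).bind σk = Tm.inL (s₁ x) := by
    rw [Tm.bind_congr (g := Tm.var) (fun m hm => hfix m (by rwa [Tm.vars_inL] at hm)),
      Tm.bind_var]
  have h5 : C.theory.Eq (sep (p x) (q x)) (sep (Tm.var 0 : Tm T.sig ℕ) (fun _ => s₁ x)) := by
    have h6 := hpq x
    rw [Mx] at h6
    exact h6.symm
  obtain ⟨Y₂, k₁, k₂, sb₂, hTk, hq₂, hs₂⟩ := C.essentiallyUnique _ _ _ _ h5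
  have hv2 := varsT hTk
  have hk20 : k₂ 0 ∈ ((p x).rename k₁).vars := by
    rw [hv2]; simp [Tm.rename, Tm.bind, Tm.vars]
  obtain ⟨v₀, hv₀, hkv⟩ := Tm.mem_vars_rename.1 hk20
  have hmem : (⟨x, v₀⟩ : Σ y, Z y) ∈ (t₁.bind fun y => (p y).rename (Sigma.mk y)).vars :=
    Tm.mem_vars_bind.2 ⟨x, hx, Tm.mem_vars_rename.2 ⟨v₀, hv₀, rfl⟩⟩
  have c1 : S.Eq (s₁ x) (sb₂ (k₂ 0)) := hs₂ 0
  have c2 : S.Eq (q x v₀) (sb₂ (k₁ v₀)) := hq₂ v₀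
  have c3 : S.Eq (q x v₀) (sb' (f₂ ⟨x, v₀⟩)) := hQ' ⟨x, v₀⟩
  have c4 : S.Eq res (sb' (f₁ 0)) := hs' 0
  rw [hkv] at c2
  rw [hconst _ hmem] at c3
  exact (c1.trans c2.symm).trans (c3.trans c4.symm)

end KillLemma
section Distrib

variable {S T : Theory}

/-- Forced left distributivity: in any composite, `x ⋄ (y ⊗ z) = (x ⋄ y) ⊗ (x ⋄ z)`. -/
theorem distribL (C : Composite S T)
    (d eS : Tm S.sig ℕ) (heS : eS.vars = ∅)
    (hdUnitL : S.Eq (subst2 d eS (.var 0)) (.var 0))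
    (hS0 : ∀ a b : Tm S.sig ℕ, a.vars = ∅ → S.Eq a b → b.vars = ∅)
    (hS1 : ∀ (a : Tm S.sig ℕ) (x : ℕ), S.Eq a (.var x) → a.vars ⊆ {x})
    (t eT : Tm T.sig ℕ) (htv : t.vars ⊆ {0, 1}) (heT : eT.vars = ∅)
    (htUnitR : T.Eq (subst2 t (.var 0) eT) (.var 0))
    (htUnitL : T.Eq (subst2 t eT (.var 0)) (.var 0))
    (hT0 : ∀ a b : Tm T.sig ℕ, a.vars = ∅ → T.Eq a b → b.vars = ∅) :
    C.theory.Eq (DD d (.var 0) (TT t (.var 1) (.var 2)))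
      (TT t (.inL (subst2 d (.var 0) (.var 1))) (.inL (subst2 d (.var 0) (.var 2)))) := by
  classical
  obtain ⟨X, t₁, s₁, hsep⟩ := C.separation (DD d (.var 0) (TT t (.var 1) (.var 2)))
  have varsS : ∀ {Y : Type} {a b : Tm S.sig Y}, S.Eq a b → a.vars = b.vars :=
    fun h => vars_eq_of_eq eS heS hS0 h
  have varsT : ∀ {Y : Type} {a b : Tm T.sig Y}, T.Eq a b → a.vars = b.vars :=
    fun h => vars_eq_of_eq eT heT hT0 h
  have htvars : t.vars = {0, 1} := vars_eq_01 t eT htv heT htUnitR htUnitL hT0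
  -- kill equations
  have hkill2 : C.theory.Eq ((DD d (.var 0) (TT t (.var 1) (.var 2))).bind
      (fun n => if n = 1 then .inR eT else .var n)) (.inL (subst2 d (.var 0) (.var 2))) := by
    rw [DD_bind, TT_bind]
    simp only [Tm.bind, reduceIte]
    have hcong : C.theory.Eq (DD d (.var 0) (TT t (.inR eT) (.var 2)))
        (DD d (.var 0) (.var 2)) := by
      unfold DD; exact bin_congr _ (Theory.Eq.refl _) (absorbTL C htUnitL heT _)
    refine hcong.trans ?_
    rw [inL_subst2]
    exact Theory.Eq.refl _
  have hkill3 : C.theory.Eq ((DD d (.var 0) (TT t (.var 1) (.var 2))).bind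
      (fun n => if n = 2 then .inR eT else .var n)) (.inL (subst2 d (.var 0) (.var 1))) := by
    rw [DD_bind, TT_bind]
    simp only [Tm.bind, reduceIte]
    have hcong : C.theory.Eq (DD d (.var 0) (TT t (.var 1) (.inR eT)))
        (DD d (.var 0) (.var 1)) := by
      unfold DD; exact bin_congr _ (Theory.Eq.refl _) (absorbTR C htUnitR heT _)
    refine hcong.trans ?_
    rw [inL_subst2]
    exact Theory.Eq.refl _
  have G2 : ∀ x ∈ t₁.vars, (1:ℕ) ∉ (s₁ x).vars →
      S.Eq (s₁ x) (subst2 d (.var 0) (.var 2)) := by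
    intro x hx h1n
    exact killLemma C eT heT hT0 _ t₁ s₁ hsep _ _ hkill2 x hx
      (fun m hm => by rw [if_neg]; intro h; exact h1n (h ▸ hm))
  have G3 : ∀ x ∈ t₁.vars, (2:ℕ) ∉ (s₁ x).vars →
      S.Eq (s₁ x) (subst2 d (.var 0) (.var 1)) := by
    intro x hx h2n
    exact killLemma C eT heT hT0 _ t₁ s₁ hsep _ _ hkill3 x hx
      (fun m hm => by rw [if_neg]; intro h; exact h2n (h ▸ hm))
  -- the clean substitution by the unit of d
  have hG1 : C.theory.Eq (sep t₁ (fun y => (s₁ y).bind (fun n => if n = 0 then eS else .var n)))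
      (sep t (fun n => if n = 0 then (Tm.var 1 : Tm S.sig ℕ) else .var 2)) := by
    have hb := hsep.bind' (fun n => .inL (τ := T.sig) (if n = 0 then eS else .var n))
    rw [DD_bind, TT_bind] at hb
    simp only [Tm.bind, reduceIte, inL_var] at hb
    have e1 : (sep t₁ s₁).bind (fun n => .inL (τ := T.sig) (if n = 0 then eS else .var n))
        = sep t₁ (fun y => (s₁ y).bind (fun n => if n = 0 then eS else .var n)) := by
      unfold sep; rw [Tm.bind_bind_s8]; congr 1; funext y; rw [Tm.inL_bind]
    rw [e1] at hb
    have habs := absorbDL C hdUnitL heS (TT t (.var 1) (.var 2))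
    have efin : TT (σ := S.sig) t (.var 1) (.var 2)
        = sep t (fun n => if n = 0 then (Tm.var 1 : Tm S.sig ℕ) else .var 2) := by
      unfold TT sep; congr 1; funext n; dsimp only; split <;> rfl
    exact (hb.symm.trans habs).trans (efin ▸ Theory.Eq.refl _)
  obtain ⟨Y, g₁, g₂, sb, hTg, hs1e, hvg⟩ := C.essentiallyUnique _ _ _ _ hG1
  have hg01 : ∀ x ∈ t₁.vars, g₁ x = g₂ 0 ∨ g₁ x = g₂ 1 := by
    intro x hx
    have h1 : g₁ x ∈ (t₁.rename g₁).vars := Tm.mem_vars_rename.2 ⟨x, hx, rfl⟩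
    rw [varsT hTg] at h1
    obtain ⟨m, hm, hme⟩ := Tm.mem_vars_rename.1 h1
    rw [htvars] at hm
    simp only [Set.mem_insert_iff, Set.mem_singleton_iff] at hm
    rcases hm with rfl | rfl
    · exact Or.inl hme.symm
    · exact Or.inr hme.symm
  have class1 : ∀ x ∈ t₁.vars, g₁ x = g₂ 0 → S.Eq (s₁ x) (subst2 d (.var 0) (.var 1)) := by
    intro x hx hc
    have h1 : S.Eq ((s₁ x).bind (fun n => if n = 0 then eS else .var n)) (.var 1) := by
      have ha := hs1e x
      have hb : S.Eq (.var 1 : Tm S.sig ℕ) (sb (g₂ 0)) := by simpa using hvg 0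
      rw [hc] at ha
      exact ha.trans hb.symm
    have hvv := varsS h1
    have h2notin : (2:ℕ) ∉ (s₁ x).vars := by
      intro h2
      have hmem : (2:ℕ) ∈ ((s₁ x).bind (fun n => if n = 0 then eS else .var n)).vars :=
        Tm.mem_vars_bind.2 ⟨2, h2, by norm_num [Tm.vars]⟩
      rw [hvv] at hmem
      simp [Tm.vars] at hmem
    exact G3 x hx h2notin
  have class2 : ∀ x ∈ t₁.vars, g₁ x = g₂ 1 → S.Eq (s₁ x) (subst2 d (.var 0) (.var 2)) := by
    intro x hx hc
    have h1 : S.Eq ((s₁ x).bind (fun n => if n = 0 then eS else .var n)) (.var 2) := by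
      have ha := hs1e x
      have hb : S.Eq (.var 2 : Tm S.sig ℕ) (sb (g₂ 1)) := by simpa using hvg 1
      rw [hc] at ha
      exact ha.trans hb.symm
    have hvv := varsS h1
    have h1notin : (1:ℕ) ∉ (s₁ x).vars := by
      intro h2
      have hmem : (1:ℕ) ∈ ((s₁ x).bind (fun n => if n = 0 then eS else .var n)).vars :=
        Tm.mem_vars_bind.2 ⟨1, h2, by norm_num [Tm.vars]⟩
      rw [hvv] at hmem
      simp [Tm.vars] at hmem
    exact G2 x hx h1notin
  have hEM : EqMod S T t₁ s₁ t
      (fun n => if n = 0 then subst2 d (.var 0) (.var 1) else subst2 d (.var 0) (.var 2)) := by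
    refine ⟨Y ⊕ X, fun x => if x ∈ t₁.vars then Sum.inl (g₁ x) else Sum.inr x,
      fun n => Sum.inl (g₂ n),
      Sum.elim (fun y => if y = g₂ 0 then subst2 d (.var 0) (.var 1)
        else subst2 d (.var 0) (.var 2)) s₁, ?_, ?_, ?_⟩
    · have e1 : t₁.rename (fun x => if x ∈ t₁.vars then (Sum.inl (g₁ x) : Y ⊕ X) else Sum.inr x)
          = (t₁.rename g₁).rename Sum.inl := by
        rw [Tm.rename_rename]
        exact Tm.rename_congr (fun x hx => by rw [if_pos hx]; rfl)
      have e2 : (t.rename (fun n => (Sum.inl (g₂ n) : Y ⊕ X)))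
          = (t.rename g₂).rename Sum.inl := by
        rw [Tm.rename_rename]; rfl
      rw [e1, e2]
      exact hTg.rename' Sum.inl
    · intro x
      dsimp only
      by_cases hx : x ∈ t₁.vars
      · rw [if_pos hx]
        simp only [Sum.elim_inl]
        by_cases hc : g₁ x = g₂ 0
        · rw [if_pos hc]; exact class1 x hx hc
        · rw [if_neg hc]; exact class2 x hx ((hg01 x hx).resolve_left hc)
      · rw [if_neg hx]; simp only [Sum.elim_inr]; exact Theory.Eq.refl _
    · intro n
      dsimp only
      simp only [Sum.elim_inl]
      by_cases hn : n = 0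
      · subst hn; rw [if_pos rfl, if_pos rfl]; exact Theory.Eq.refl _
      · rw [if_neg hn]
        have hcond : g₂ n ≠ g₂ 0 := by
          intro hEq
          have h2 : S.Eq (.var 2 : Tm S.sig ℕ) (sb (g₂ n)) := by
            have := hvg n
            dsimp only at this
            rw [if_neg hn] at this
            exact this
          have h1 : S.Eq (.var 1 : Tm S.sig ℕ) (sb (g₂ 0)) := by simpa using hvg 0
          rw [hEq] at h2
          have := var_inj hS1 (h2.trans h1.symm)
          norm_num at this
        rw [if_neg hcond]; exact Theory.Eq.refl _
  have hfin := eqmod_to_U C hEM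
  have efin : sep t (fun n => if n = 0 then subst2 d (.var 0) (.var 1)
      else subst2 d (.var 0) (.var 2))
      = TT t (.inL (subst2 d (.var 0) (.var 1))) (.inL (subst2 d (.var 0) (.var 2))) := by
    unfold sep TT; congr 1; funext n; dsimp only; split <;> rfl
  exact hsep.trans (efin ▸ hfin)

end Distrib
section DistribR

variable {S T : Theory}

/-- Forced right distributivity: in any composite, `(x ⊗ y) ⋄ z = (x ⋄ z) ⊗ (y ⋄ z)`. -/
theorem distribR (C : Composite S T)
    (d eS : Tm S.sig ℕ) (heS : eS.vars = ∅)
    (hdUnitR : S.Eq (subst2 d (.var 0) eS) (.var 0))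
    (hS0 : ∀ a b : Tm S.sig ℕ, a.vars = ∅ → S.Eq a b → b.vars = ∅)
    (hS1 : ∀ (a : Tm S.sig ℕ) (x : ℕ), S.Eq a (.var x) → a.vars ⊆ {x})
    (t eT : Tm T.sig ℕ) (htv : t.vars ⊆ {0, 1}) (heT : eT.vars = ∅)
    (htUnitR : T.Eq (subst2 t (.var 0) eT) (.var 0))
    (htUnitL : T.Eq (subst2 t eT (.var 0)) (.var 0))
    (hT0 : ∀ a b : Tm T.sig ℕ, a.vars = ∅ → T.Eq a b → b.vars = ∅) :
    C.theory.Eq (DD d (TT t (.var 0) (.var 1)) (.var 2))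
      (TT t (.inL (subst2 d (.var 0) (.var 2))) (.inL (subst2 d (.var 1) (.var 2)))) := by
  classical
  obtain ⟨X, t₁, s₁, hsep⟩ := C.separation (DD d (TT t (.var 0) (.var 1)) (.var 2))
  have varsS : ∀ {Y : Type} {a b : Tm S.sig Y}, S.Eq a b → a.vars = b.vars :=
    fun h => vars_eq_of_eq eS heS hS0 h
  have varsT : ∀ {Y : Type} {a b : Tm T.sig Y}, T.Eq a b → a.vars = b.vars :=
    fun h => vars_eq_of_eq eT heT hT0 h
  have htvars : t.vars = {0, 1} := vars_eq_01 t eT htv heT htUnitR htUnitL hT0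
  -- kill equations
  have hkill0 : C.theory.Eq ((DD d (TT t (.var 0) (.var 1)) (.var 2)).bind
      (fun n => if n = 0 then .inR eT else .var n)) (.inL (subst2 d (.var 1) (.var 2))) := by
    rw [DD_bind, TT_bind]
    simp only [Tm.bind, reduceIte]
    have hcong : C.theory.Eq (DD d (TT t (.inR eT) (.var 1)) (.var 2))
        (DD d (.var 1) (.var 2)) := by
      unfold DD; exact bin_congr _ (absorbTL C htUnitL heT _) (Theory.Eq.refl _)
    refine hcong.trans ?_
    rw [inL_subst2]
    exact Theory.Eq.refl _
  have hkill1 : C.theory.Eq ((DD d (TT t (.var 0) (.var 1)) (.var 2)).bind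
      (fun n => if n = 1 then .inR eT else .var n)) (.inL (subst2 d (.var 0) (.var 2))) := by
    rw [DD_bind, TT_bind]
    simp only [Tm.bind, reduceIte]
    have hcong : C.theory.Eq (DD d (TT t (.var 0) (.inR eT)) (.var 2))
        (DD d (.var 0) (.var 2)) := by
      unfold DD; exact bin_congr _ (absorbTR C htUnitR heT _) (Theory.Eq.refl _)
    refine hcong.trans ?_
    rw [inL_subst2]
    exact Theory.Eq.refl _
  have G2 : ∀ x ∈ t₁.vars, (0:ℕ) ∉ (s₁ x).vars →
      S.Eq (s₁ x) (subst2 d (.var 1) (.var 2)) := by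
    intro x hx h0n
    exact killLemma C eT heT hT0 _ t₁ s₁ hsep _ _ hkill0 x hx
      (fun m hm => by rw [if_neg]; intro h; exact h0n (h ▸ hm))
  have G3 : ∀ x ∈ t₁.vars, (1:ℕ) ∉ (s₁ x).vars →
      S.Eq (s₁ x) (subst2 d (.var 0) (.var 2)) := by
    intro x hx h1n
    exact killLemma C eT heT hT0 _ t₁ s₁ hsep _ _ hkill1 x hx
      (fun m hm => by rw [if_neg]; intro h; exact h1n (h ▸ hm))
  -- the clean substitution by the unit of d
  have hG1 : C.theory.Eq (sep t₁ (fun y => (s₁ y).bind (fun n => if n = 2 then eS else .var n)))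
      (sep t (fun n => if n = 0 then (Tm.var 0 : Tm S.sig ℕ) else .var 1)) := by
    have hb := hsep.bind' (fun n => .inL (τ := T.sig) (if n = 2 then eS else .var n))
    rw [DD_bind, TT_bind] at hb
    simp only [Tm.bind, reduceIte, inL_var] at hb
    have e1 : (sep t₁ s₁).bind (fun n => .inL (τ := T.sig) (if n = 2 then eS else .var n))
        = sep t₁ (fun y => (s₁ y).bind (fun n => if n = 2 then eS else .var n)) := by
      unfold sep; rw [Tm.bind_bind_s8]; congr 1; funext y; rw [Tm.inL_bind]
    rw [e1] at hb
    have habs := absorbDR C hdUnitR heS (TT t (.var 0) (.var 1))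
    have efin : TT (σ := S.sig) t (.var 0) (.var 1)
        = sep t (fun n => if n = 0 then (Tm.var 0 : Tm S.sig ℕ) else .var 1) := by
      unfold TT sep; congr 1; funext n; dsimp only; split <;> rfl
    exact (hb.symm.trans habs).trans (efin ▸ Theory.Eq.refl _)
  obtain ⟨Y, g₁, g₂, sb, hTg, hs1e, hvg⟩ := C.essentiallyUnique _ _ _ _ hG1
  have hg01 : ∀ x ∈ t₁.vars, g₁ x = g₂ 0 ∨ g₁ x = g₂ 1 := by
    intro x hx
    have h1 : g₁ x ∈ (t₁.rename g₁).vars := Tm.mem_vars_rename.2 ⟨x, hx, rfl⟩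
    rw [varsT hTg] at h1
    obtain ⟨m, hm, hme⟩ := Tm.mem_vars_rename.1 h1
    rw [htvars] at hm
    simp only [Set.mem_insert_iff, Set.mem_singleton_iff] at hm
    rcases hm with rfl | rfl
    · exact Or.inl hme.symm
    · exact Or.inr hme.symm
  have class1 : ∀ x ∈ t₁.vars, g₁ x = g₂ 0 → S.Eq (s₁ x) (subst2 d (.var 0) (.var 2)) := by
    intro x hx hc
    have h1 : S.Eq ((s₁ x).bind (fun n => if n = 2 then eS else .var n)) (.var 0) := by
      have ha := hs1e x
      have hb : S.Eq (.var 0 : Tm S.sig ℕ) (sb (g₂ 0)) := by simpa using hvg 0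
      rw [hc] at ha
      exact ha.trans hb.symm
    have hvv := varsS h1
    have h1notin : (1:ℕ) ∉ (s₁ x).vars := by
      intro h2
      have hmem : (1:ℕ) ∈ ((s₁ x).bind (fun n => if n = 2 then eS else .var n)).vars :=
        Tm.mem_vars_bind.2 ⟨1, h2, by norm_num [Tm.vars]⟩
      rw [hvv] at hmem
      simp [Tm.vars] at hmem
    exact G3 x hx h1notin
  have class2 : ∀ x ∈ t₁.vars, g₁ x = g₂ 1 → S.Eq (s₁ x) (subst2 d (.var 1) (.var 2)) := by
    intro x hx hc
    have h1 : S.Eq ((s₁ x).bind (fun n => if n = 2 then eS else .var n)) (.var 1) := by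
      have ha := hs1e x
      have hb : S.Eq (.var 1 : Tm S.sig ℕ) (sb (g₂ 1)) := by simpa using hvg 1
      rw [hc] at ha
      exact ha.trans hb.symm
    have hvv := varsS h1
    have h0notin : (0:ℕ) ∉ (s₁ x).vars := by
      intro h2
      have hmem : (0:ℕ) ∈ ((s₁ x).bind (fun n => if n = 2 then eS else .var n)).vars :=
        Tm.mem_vars_bind.2 ⟨0, h2, by norm_num [Tm.vars]⟩
      rw [hvv] at hmem
      simp [Tm.vars] at hmem
    exact G2 x hx h0notin
  have hEM : EqMod S T t₁ s₁ t
      (fun n => if n = 0 then subst2 d (.var 0) (.var 2) else subst2 d (.var 1) (.var 2)) := by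
    refine ⟨Y ⊕ X, fun x => if x ∈ t₁.vars then Sum.inl (g₁ x) else Sum.inr x,
      fun n => Sum.inl (g₂ n),
      Sum.elim (fun y => if y = g₂ 0 then subst2 d (.var 0) (.var 2)
        else subst2 d (.var 1) (.var 2)) s₁, ?_, ?_, ?_⟩
    · have e1 : t₁.rename (fun x => if x ∈ t₁.vars then (Sum.inl (g₁ x) : Y ⊕ X) else Sum.inr x)
          = (t₁.rename g₁).rename Sum.inl := by
        rw [Tm.rename_rename]
        exact Tm.rename_congr (fun x hx => by rw [if_pos hx]; rfl)
      have e2 : (t.rename (fun n => (Sum.inl (g₂ n) : Y ⊕ X)))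
          = (t.rename g₂).rename Sum.inl := by
        rw [Tm.rename_rename]; rfl
      rw [e1, e2]
      exact hTg.rename' Sum.inl
    · intro x
      dsimp only
      by_cases hx : x ∈ t₁.vars
      · rw [if_pos hx]
        simp only [Sum.elim_inl]
        by_cases hc : g₁ x = g₂ 0
        · rw [if_pos hc]; exact class1 x hx hc
        · rw [if_neg hc]; exact class2 x hx ((hg01 x hx).resolve_left hc)
      · rw [if_neg hx]; simp only [Sum.elim_inr]; exact Theory.Eq.refl _
    · intro n
      dsimp only
      simp only [Sum.elim_inl]
      by_cases hn : n = 0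
      · subst hn; rw [if_pos rfl, if_pos rfl]; exact Theory.Eq.refl _
      · rw [if_neg hn]
        have hcond : g₂ n ≠ g₂ 0 := by
          intro hEq
          have h2 : S.Eq (.var 1 : Tm S.sig ℕ) (sb (g₂ n)) := by
            have := hvg n
            dsimp only at this
            rw [if_neg hn] at this
            exact this
          have h1 : S.Eq (.var 0 : Tm S.sig ℕ) (sb (g₂ 0)) := by simpa using hvg 0
          rw [hEq] at h2
          have := var_inj hS1 (h2.trans h1.symm)
          norm_num at this
        rw [if_neg hcond]; exact Theory.Eq.refl _
  have hfin := eqmod_to_U C hEM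
  have efin : sep t (fun n => if n = 0 then subst2 d (.var 0) (.var 2)
      else subst2 d (.var 1) (.var 2))
      = TT t (.inL (subst2 d (.var 0) (.var 2))) (.inL (subst2 d (.var 1) (.var 2))) := by
    unfold sep TT; congr 1; funext n; dsimp only; split <;> rfl
  exact hsep.trans (efin ▸ hfin)

end DistribR
section Final

@[simp] theorem var_rename {σ : Sig} {X Y : Type} (x : X) (f : X → Y) :
    (Tm.var x : Tm σ X).rename f = .var (f x) := rfl

theorem inL_bind_var {σ τ : Sig} {X Y : Type} (a : Tm σ X) (f : X → Y) :
    (Tm.inL (τ := τ) a).bind (fun x => .var (f x)) = .inL (a.rename f) := by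
  rw [Tm.inL_rename]; rfl

theorem rename_fix {σ : Sig} {X : Type} {t : Tm σ X} {f : X → X}
    (h : ∀ x ∈ t.vars, f x = x) : t.rename f = t := by
  rw [Tm.rename, Tm.bind_congr (g := Tm.var) (fun x hx => by rw [h x hx]), Tm.bind_var]

theorem vars_subst2 {σ : Sig} {b : Tm σ ℕ} (hb : b.vars = {0, 1}) (i j : ℕ) :
    (subst2 b (.var i) (.var j)).vars = {i, j} := by
  ext m
  simp only [subst2, Tm.mem_vars_bind, hb, Set.mem_insert_iff, Set.mem_singleton_iff]
  constructor
  · rintro ⟨x, hx | hx, hm⟩ <;> subst hx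
    · rw [if_pos rfl] at hm
      left; simpa [Tm.vars] using hm
    · rw [if_neg (by norm_num)] at hm
      right; simpa [Tm.vars] using hm
  · rintro (rfl | rfl)
    · exact ⟨0, Or.inl rfl, by simp [Tm.vars]⟩
    · exact ⟨1, Or.inr rfl, by simp [Tm.vars]⟩

variable {S T : Theory}

theorem distribL' (C : Composite S T)
    (d eS : Tm S.sig ℕ) (heS : eS.vars = ∅)
    (hdUnitL : S.Eq (subst2 d eS (.var 0)) (.var 0))
    (hS0 : ∀ a b : Tm S.sig ℕ, a.vars = ∅ → S.Eq a b → b.vars = ∅)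
    (hS1 : ∀ (a : Tm S.sig ℕ) (x : ℕ), S.Eq a (.var x) → a.vars ⊆ {x})
    (t eT : Tm T.sig ℕ) (htv : t.vars ⊆ {0, 1}) (heT : eT.vars = ∅)
    (htUnitR : T.Eq (subst2 t (.var 0) eT) (.var 0))
    (htUnitL : T.Eq (subst2 t eT (.var 0)) (.var 0))
    (hT0 : ∀ a b : Tm T.sig ℕ, a.vars = ∅ → T.Eq a b → b.vars = ∅)
    (a b c : ℕ) :
    C.theory.Eq (DD d (.var a) (TT t (.var b) (.var c)))
      (TT t (.inL (subst2 d (.var a) (.var b))) (.inL (subst2 d (.var a) (.var c)))) := by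
  have h := (distribL C d eS heS hdUnitL hS0 hS1 t eT htv heT htUnitR htUnitL hT0).bind'
    (fun n => .var (if n = 0 then a else if n = 1 then b else c))
  unfold Composite.theory at h ⊢
  simp only [DD_bind, TT_bind, Tm.bind, inL_bind_var, subst2_rename, var_rename,
    reduceIte] at h
  exact h

theorem distribR' (C : Composite S T)
    (d eS : Tm S.sig ℕ) (heS : eS.vars = ∅)
    (hdUnitR : S.Eq (subst2 d (.var 0) eS) (.var 0))
    (hS0 : ∀ a b : Tm S.sig ℕ, a.vars = ∅ → S.Eq a b → b.vars = ∅)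
    (hS1 : ∀ (a : Tm S.sig ℕ) (x : ℕ), S.Eq a (.var x) → a.vars ⊆ {x})
    (t eT : Tm T.sig ℕ) (htv : t.vars ⊆ {0, 1}) (heT : eT.vars = ∅)
    (htUnitR : T.Eq (subst2 t (.var 0) eT) (.var 0))
    (htUnitL : T.Eq (subst2 t eT (.var 0)) (.var 0))
    (hT0 : ∀ a b : Tm T.sig ℕ, a.vars = ∅ → T.Eq a b → b.vars = ∅)
    (a b c : ℕ) :
    C.theory.Eq (DD d (TT t (.var a) (.var b)) (.var c))
      (TT t (.inL (subst2 d (.var a) (.var c))) (.inL (subst2 d (.var b) (.var c)))) := by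
  have h := (distribR C d eS heS hdUnitR hS0 hS1 t eT htv heT htUnitR htUnitL hT0).bind'
    (fun n => .var (if n = 0 then a else if n = 1 then b else c))
  unfold Composite.theory at h ⊢
  simp only [DD_bind, TT_bind, Tm.bind, inL_bind_var, subst2_rename, var_rename,
    reduceIte] at h
  exact h

theorem noGoAux (C : Composite S T)
    (d eS : Tm S.sig ℕ) (hdv : d.vars ⊆ {0, 1}) (heS : eS.vars = ∅)
    (hdUnitR : S.Eq (subst2 d (.var 0) eS) (.var 0))
    (hdUnitL : S.Eq (subst2 d eS (.var 0)) (.var 0))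
    (hS0 : ∀ a b : Tm S.sig ℕ, a.vars = ∅ → S.Eq a b → b.vars = ∅)
    (hS1 : ∀ (a : Tm S.sig ℕ) (x : ℕ), S.Eq a (.var x) → a.vars ⊆ {x})
    (t eT : Tm T.sig ℕ) (htv : t.vars ⊆ {0, 1}) (heT : eT.vars = ∅)
    (htUnitR : T.Eq (subst2 t (.var 0) eT) (.var 0))
    (htUnitL : T.Eq (subst2 t eT (.var 0)) (.var 0))
    (hT0 : ∀ a b : Tm T.sig ℕ, a.vars = ∅ → T.Eq a b → b.vars = ∅)
    (habides : ∀ x y z w : ℕ,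
      T.Eq (subst2 t (subst2 t (.var x) (.var y)) (subst2 t (.var z) (.var w)))
           (subst2 t (subst2 t (.var x) (.var z)) (subst2 t (.var y) (.var w))) →
      ({x, y, z, w} : Finset ℕ).card ≤ 3) : False := by
  have varsS : ∀ {Y : Type} {a b : Tm S.sig Y}, S.Eq a b → a.vars = b.vars :=
    fun h => vars_eq_of_eq eS heS hS0 h
  have hdvars : d.vars = {0, 1} := vars_eq_01 d eS hdv heS hdUnitR hdUnitL hS0
  have htvars : t.vars = {0, 1} := vars_eq_01 t eT htv heT htUnitR htUnitL hT0
  have vsub := vars_subst2 hdvars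
  have vsubT := vars_subst2 htvars
  -- Order 1: u ≡ ((0⋄2)⊗(0⋄3)) ⊗ ((1⋄2)⊗(1⋄3))
  have h1 := distribR' C d eS heS hdUnitR hS0 hS1 t eT htv heT htUnitR htUnitL hT0 0 1 4
  have h2 := h1.bind' (fun n => if n = 4 then (TT t (.var 2) (.var 3) :
    Tm (S.sig.sum T.sig) ℕ) else .var n)
  unfold Composite.theory at h2
  simp [inL_subst2, inL_var, DD_bind, TT_bind, Tm.bind] at h2
  have hc1 : C.theory.Eq
      (TT t (DD d (.var 0) (TT t (.var 2) (.var 3))) (DD d (.var 1) (TT t (.var 2) (.var 3))))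
      (TT t (TT t (.inL (subst2 d (.var 0) (.var 2))) (.inL (subst2 d (.var 0) (.var 3))))
            (TT t (.inL (subst2 d (.var 1) (.var 2))) (.inL (subst2 d (.var 1) (.var 3))))) := by
    unfold TT
    exact bin_congr _
      (distribL' C d eS heS hdUnitL hS0 hS1 t eT htv heT htUnitR htUnitL hT0 0 2 3)
      (distribL' C d eS heS hdUnitL hS0 hS1 t eT htv heT htUnitR htUnitL hT0 1 2 3)
  have form1eq := h2.trans hc1
  -- Order 2: u ≡ ((0⋄2)⊗(1⋄2)) ⊗ ((0⋄3)⊗(1⋄3))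
  have h3 := distribL' C d eS heS hdUnitL hS0 hS1 t eT htv heT htUnitR htUnitL hT0 4 2 3
  have h4 := h3.bind' (fun n => if n = 4 then (TT t (.var 0) (.var 1) :
    Tm (S.sig.sum T.sig) ℕ) else .var n)
  unfold Composite.theory at h4
  simp [inL_subst2, inL_var, DD_bind, TT_bind, Tm.bind] at h4
  have hc2 : C.theory.Eq
      (TT t (DD d (TT t (.var 0) (.var 1)) (.var 2)) (DD d (TT t (.var 0) (.var 1)) (.var 3)))
      (TT t (TT t (.inL (subst2 d (.var 0) (.var 2))) (.inL (subst2 d (.var 1) (.var 2))))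
            (TT t (.inL (subst2 d (.var 0) (.var 3))) (.inL (subst2 d (.var 1) (.var 3))))) := by
    unfold TT
    exact bin_congr _
      (distribR' C d eS heS hdUnitR hS0 hS1 t eT htv heT htUnitR htUnitL hT0 0 1 2)
      (distribR' C d eS heS hdUnitR hS0 hS1 t eT htv heT htUnitR htUnitL hT0 0 1 3)
  have form2eq := h4.trans hc2
  -- both forms are separated terms with the same T-part
  have e1 : sep (subst2 t (subst2 t (.var 0) (.var 1)) (subst2 t (.var 2) (.var 3)))
      (fun n => if n = 0 then subst2 d (.var 0) (.var 2) else if n = 1 then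
        subst2 d (.var 0) (.var 3) else if n = 2 then subst2 d (.var 1) (.var 2)
        else subst2 d (.var 1) (.var 3))
      = TT t (TT t (.inL (subst2 d (.var 0) (.var 2))) (.inL (subst2 d (.var 0) (.var 3))))
             (TT t (.inL (subst2 d (.var 1) (.var 2))) (.inL (subst2 d (.var 1) (.var 3)))) := by
    simp [sep, inR_subst2, inR_var, TT_bind, Tm.bind]
  have e2 : sep (subst2 t (subst2 t (.var 0) (.var 1)) (subst2 t (.var 2) (.var 3)))
      (fun n => if n = 0 then subst2 d (.var 0) (.var 2) else if n = 1 then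
        subst2 d (.var 1) (.var 2) else if n = 2 then subst2 d (.var 0) (.var 3)
        else subst2 d (.var 1) (.var 3))
      = TT t (TT t (.inL (subst2 d (.var 0) (.var 2))) (.inL (subst2 d (.var 1) (.var 2))))
             (TT t (.inL (subst2 d (.var 0) (.var 3))) (.inL (subst2 d (.var 1) (.var 3)))) := by
    simp [sep, inR_subst2, inR_var, TT_bind, Tm.bind]
  have hUsep : C.theory.Eq
      (sep (subst2 t (subst2 t (.var 0) (.var 1)) (subst2 t (.var 2) (.var 3)))
        (fun n => if n = 0 then subst2 d (.var 0) (.var 2) else if n = 1 then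
          subst2 d (.var 0) (.var 3) else if n = 2 then subst2 d (.var 1) (.var 2)
          else subst2 d (.var 1) (.var 3)))
      (sep (subst2 t (subst2 t (.var 0) (.var 1)) (subst2 t (.var 2) (.var 3)))
        (fun n => if n = 0 then subst2 d (.var 0) (.var 2) else if n = 1 then
          subst2 d (.var 1) (.var 2) else if n = 2 then subst2 d (.var 0) (.var 3)
          else subst2 d (.var 1) (.var 3))) := by
    rw [e1, e2]
    exact form1eq.symm.trans form2eq
  obtain ⟨Y, f₁, f₂, sb, hT, hL1, hL2⟩ := C.essentiallyUnique _ _ _ _ hUsep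
  -- reduced label facts
  have u0 : S.Eq (subst2 d (.var 0) (.var 2)) (sb (f₁ 0)) := by simpa using hL1 0
  have u1 : S.Eq (subst2 d (.var 0) (.var 3)) (sb (f₁ 1)) := by simpa using hL1 1
  have u2 : S.Eq (subst2 d (.var 1) (.var 2)) (sb (f₁ 2)) := by simpa using hL1 2
  have u3 : S.Eq (subst2 d (.var 1) (.var 3)) (sb (f₁ 3)) := by simpa using hL1 3
  have w0 : S.Eq (subst2 d (.var 0) (.var 2)) (sb (f₂ 0)) := by simpa using hL2 0
  have w1 : S.Eq (subst2 d (.var 1) (.var 2)) (sb (f₂ 1)) := by simpa using hL2 1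
  have w2 : S.Eq (subst2 d (.var 0) (.var 3)) (sb (f₂ 2)) := by simpa using hL2 2
  have w3 : S.Eq (subst2 d (.var 1) (.var 3)) (sb (f₂ 3)) := by simpa using hL2 3
  have pairne : ∀ i j k l : ℕ, i < 2 → k < 2 → 2 ≤ j → j ≤ 3 → 2 ≤ l → l ≤ 3 →
      ¬(i = k ∧ j = l) → ({i, j} : Set ℕ) ≠ ({k, l} : Set ℕ) := by
    intro i j k l hi hk hj1 hj2 hl1 hl2 hne hEq
    apply hne
    have hik : i = k := by
      have hmem : i ∈ ({k, l} : Set ℕ) := hEq ▸ (by simp)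
      simp only [Set.mem_insert_iff, Set.mem_singleton_iff] at hmem
      rcases hmem with h | h
      · exact h
      · omega
    have hjl : j = l := by
      have hmem : j ∈ ({k, l} : Set ℕ) := hEq ▸ (by simp)
      simp only [Set.mem_insert_iff, Set.mem_singleton_iff] at hmem
      rcases hmem with h | h
      · omega
      · exact h
    exact ⟨hik, hjl⟩
  have clash : ∀ {ya yb : Y} {p q : Tm S.sig ℕ},
      S.Eq p (sb ya) → S.Eq q (sb yb) → p.vars ≠ q.vars → ya ≠ yb := by
    intro ya yb p q hp hq hne hEq
    apply hne
    rw [hEq] at hp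
    exact varsS (hp.trans hq.symm)
  -- distinctness facts
  have n10 : f₁ 1 ≠ f₁ 0 := clash u1 u0 (by rw [vsub, vsub]; apply pairne <;> omega)
  have n20 : f₁ 2 ≠ f₁ 0 := clash u2 u0 (by rw [vsub, vsub]; apply pairne <;> omega)
  have n21 : f₁ 2 ≠ f₁ 1 := clash u2 u1 (by rw [vsub, vsub]; apply pairne <;> omega)
  have n30 : f₁ 3 ≠ f₁ 0 := clash u3 u0 (by rw [vsub, vsub]; apply pairne <;> omega)
  have n31 : f₁ 3 ≠ f₁ 1 := clash u3 u1 (by rw [vsub, vsub]; apply pairne <;> omega)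
  have n32 : f₁ 3 ≠ f₁ 2 := clash u3 u2 (by rw [vsub, vsub]; apply pairne <;> omega)
  have m01 : f₂ 0 ≠ f₁ 1 := clash w0 u1 (by rw [vsub, vsub]; apply pairne <;> omega)
  have m02 : f₂ 0 ≠ f₁ 2 := clash w0 u2 (by rw [vsub, vsub]; apply pairne <;> omega)
  have m03 : f₂ 0 ≠ f₁ 3 := clash w0 u3 (by rw [vsub, vsub]; apply pairne <;> omega)
  have m10 : f₂ 1 ≠ f₁ 0 := clash w1 u0 (by rw [vsub, vsub]; apply pairne <;> omega)
  have m11 : f₂ 1 ≠ f₁ 1 := clash w1 u1 (by rw [vsub, vsub]; apply pairne <;> omega)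
  have m13 : f₂ 1 ≠ f₁ 3 := clash w1 u3 (by rw [vsub, vsub]; apply pairne <;> omega)
  have m1b0 : f₂ 1 ≠ f₂ 0 := clash w1 w0 (by rw [vsub, vsub]; apply pairne <;> omega)
  have m20 : f₂ 2 ≠ f₁ 0 := clash w2 u0 (by rw [vsub, vsub]; apply pairne <;> omega)
  have m22 : f₂ 2 ≠ f₁ 2 := clash w2 u2 (by rw [vsub, vsub]; apply pairne <;> omega)
  have m23 : f₂ 2 ≠ f₁ 3 := clash w2 u3 (by rw [vsub, vsub]; apply pairne <;> omega)
  have m2b0 : f₂ 2 ≠ f₂ 0 := clash w2 w0 (by rw [vsub, vsub]; apply pairne <;> omega)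
  have m2b1 : f₂ 2 ≠ f₂ 1 := clash w2 w1 (by rw [vsub, vsub]; apply pairne <;> omega)
  have m30 : f₂ 3 ≠ f₁ 0 := clash w3 u0 (by rw [vsub, vsub]; apply pairne <;> omega)
  have m31 : f₂ 3 ≠ f₁ 1 := clash w3 u1 (by rw [vsub, vsub]; apply pairne <;> omega)
  have m32 : f₂ 3 ≠ f₁ 2 := clash w3 u2 (by rw [vsub, vsub]; apply pairne <;> omega)
  have m3b0 : f₂ 3 ≠ f₂ 0 := clash w3 w0 (by rw [vsub, vsub]; apply pairne <;> omega)
  have m3b1 : f₂ 3 ≠ f₂ 1 := clash w3 w1 (by rw [vsub, vsub]; apply pairne <;> omega)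
  have m3b2 : f₂ 3 ≠ f₂ 2 := clash w3 w2 (by rw [vsub, vsub]; apply pairne <;> omega)
  -- collapse Y to ℕ
  haveI : DecidableEq Y := Classical.decEq Y
  set h : Y → ℕ := fun y => if y = f₁ 0 then 0 else if y = f₁ 1 then 1 else
    if y = f₁ 2 then 2 else if y = f₁ 3 then 3 else if y = f₂ 0 then 0 else
    if y = f₂ 1 then 2 else if y = f₂ 2 then 1 else if y = f₂ 3 then 3 else 0 with hh
  have hf10 : h (f₁ 0) = 0 := by simp [hh]
  have hf11 : h (f₁ 1) = 1 := by simp [hh, n10]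
  have hf12 : h (f₁ 2) = 2 := by simp [hh, n20, n21]
  have hf13 : h (f₁ 3) = 3 := by simp [hh, n30, n31, n32]
  have hf20 : h (f₂ 0) = 0 := by
    by_cases hc : f₂ 0 = f₁ 0
    · simp [hh, hc]
    · simp [hh, hc, m01, m02, m03]
  have hf21 : h (f₂ 1) = 2 := by
    by_cases hc : f₂ 1 = f₁ 2
    · simp [hh, hc, n20, n21]
    · simp [hh, hc, m10, m11, m13, m1b0]
  have hf22 : h (f₂ 2) = 1 := by
    by_cases hc : f₂ 2 = f₁ 1
    · simp [hh, hc, n10]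
    · simp [hh, hc, m20, m22, m23, m2b0, m2b1]
  have hf23 : h (f₂ 3) = 3 := by
    by_cases hc : f₂ 3 = f₁ 3
    · simp [hh, hc, n30, n31, n32]
    · simp [hh, hc, m30, m31, m32, m3b0, m3b1, m3b2]
  -- variables of the doubled term
  have httv : ∀ m ∈ (subst2 t (subst2 t (.var 0) (.var 1))
      (subst2 t (.var 2) (.var 3)) : Tm T.sig ℕ).vars, m = 0 ∨ m = 1 ∨ m = 2 ∨ m = 3 := by
    intro m hm
    simp only [subst2] at hm
    obtain ⟨x, hx, hmm⟩ := Tm.mem_vars_bind.1 hm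
    by_cases hx0 : x = 0
    · rw [if_pos hx0] at hmm
      have : (subst2 t (.var 0) (.var 1) : Tm T.sig ℕ).vars = {0, 1} := vsubT 0 1
      rw [show (Tm.bind t fun i => if i = 0 then (Tm.var 0 : Tm T.sig ℕ) else .var 1)
        = subst2 t (.var 0) (.var 1) from rfl, this] at hmm
      simp only [Set.mem_insert_iff, Set.mem_singleton_iff] at hmm
      tauto
    · rw [if_neg hx0] at hmm
      have : (subst2 t (.var 2) (.var 3) : Tm T.sig ℕ).vars = {2, 3} := vsubT 2 3
      rw [show (Tm.bind t fun i => if i = 0 then (Tm.var 2 : Tm T.sig ℕ) else .var 3)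
        = subst2 t (.var 2) (.var 3) from rfl, this] at hmm
      simp only [Set.mem_insert_iff, Set.mem_singleton_iff] at hmm
      tauto
  have hren := hT.rename' h
  rw [Tm.rename_rename, Tm.rename_rename] at hren
  have eL : (subst2 t (subst2 t (.var 0) (.var 1)) (subst2 t (.var 2) (.var 3)) :
      Tm T.sig ℕ).rename (h ∘ f₁)
      = subst2 t (subst2 t (.var 0) (.var 1)) (subst2 t (.var 2) (.var 3)) := by
    apply rename_fix
    intro m hm
    rcases httv m hm with rfl | rfl | rfl | rfl
    exacts [hf10, hf11, hf12, hf13]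
  have eR : (subst2 t (subst2 t (.var 0) (.var 1)) (subst2 t (.var 2) (.var 3)) :
      Tm T.sig ℕ).rename (h ∘ f₂)
      = subst2 t (subst2 t (.var 0) (.var 2)) (subst2 t (.var 1) (.var 3)) := by
    have estep : (subst2 t (subst2 t (.var 0) (.var 1)) (subst2 t (.var 2) (.var 3)) :
        Tm T.sig ℕ).rename (h ∘ f₂)
        = (subst2 t (subst2 t (.var 0) (.var 1)) (subst2 t (.var 2) (.var 3)) :
        Tm T.sig ℕ).rename (fun m => if m = 0 then 0 else if m = 1 then 2 else
          if m = 2 then 1 else 3) := by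
      apply Tm.rename_congr
      intro m hm
      rcases httv m hm with rfl | rfl | rfl | rfl
      · show h (f₂ 0) = _; rw [hf20]; norm_num
      · show h (f₂ 1) = _; rw [hf21]; norm_num
      · show h (f₂ 2) = _; rw [hf22]; norm_num
      · show h (f₂ 3) = _; rw [hf23]; norm_num
    rw [estep]
    simp [subst2_rename, var_rename]
  rw [eL, eR] at hren
  have hcard := habides 0 1 2 3 hren
  have : ({0, 1, 2, 3} : Finset ℕ).card = 4 := by decide
  omega

end Final
/-- no-go: lacking abides. -/
theorem noGo_lacking_abides (S T : Theory)
    (d eS : Tm S.sig ℕ) (hdv : d.vars ⊆ {0, 1}) (heS : eS.vars = ∅)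
    (hdUnitR : S.Eq (subst2 d (.var 0) eS) (.var 0))
    (hdUnitL : S.Eq (subst2 d eS (.var 0)) (.var 0))
    (hS0 : ∀ a b : Tm S.sig ℕ, a.vars = ∅ → S.Eq a b → b.vars = ∅)
    (hS1 : ∀ (a : Tm S.sig ℕ) (x : ℕ), S.Eq a (.var x) → a.vars ⊆ {x})
    (hSred : ∀ a : Tm S.sig ℕ, a.vars.Nonempty →
      ∃ f : ℕ → Tm S.sig ℕ, ∀ x ∈ a.vars,
        S.Eq (a.bind fun y => if y = x then .var x else f y) (.var x))
    (t eT : Tm T.sig ℕ) (htv : t.vars ⊆ {0, 1}) (heT : eT.vars = ∅)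
    (htUnitR : T.Eq (subst2 t (.var 0) eT) (.var 0))
    (htUnitL : T.Eq (subst2 t eT (.var 0)) (.var 0))
    (hT0 : ∀ a b : Tm T.sig ℕ, a.vars = ∅ → T.Eq a b → b.vars = ∅)
    (hT1 : ∀ (a : Tm T.sig ℕ) (x : ℕ), T.Eq a (.var x) → a.vars ⊆ {x})
    -- ⊗ does not satisfy the abides equation with four distinct variables
    (habides : ∀ x y z w : ℕ,
      T.Eq (subst2 t (subst2 t (.var x) (.var y)) (subst2 t (.var z) (.var w)))
           (subst2 t (subst2 t (.var x) (.var z)) (subst2 t (.var y) (.var w))) →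
      ({x, y, z, w} : Finset ℕ).card ≤ 3) :
    IsEmpty (Composite S T) := by
  exact ⟨fun C => noGoAux C d eS hdv heS hdUnitR hdUnitL hS0 hS1 t eT htv heT
    htUnitR htUnitL hT0 habides⟩
end
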